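/- Let 𝕋 = ℝ/2πℤ with Lebesgue measure, and let g : 𝕋 → ℝ be continuous with g ≥ 0 and ∫_𝕋 g = 1. For each integer k define β_k := ∫_𝕋 |g(x)·(e^{−ikx}/√(2π) − ∫_𝕋 g(y) e^{−iky}/√(2π) dy)|² dx. Then β_0 = 0 and β_k > 0 for every integer k ≠ 0. -/

import Mathlib

open MeasureTheory

instance : Fact ((0 : ℝ) < 2 * Real.pi) := ⟨by positivity⟩

/-- `β_k = ‖G(e^{-ikx}/√(2π))‖²_{L²(𝕋)}` where
`(Gℓ)(x) = g(x) (ℓ(x) − ∫ g(y) ℓ(y) dy)` on `𝕋 = ℝ/2πℤ`. -/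
noncomputable def betaCoef (g : AddCircle (2 * Real.pi) → ℝ) (k : ℤ) : ℝ :=
  ∫ x : AddCircle (2 * Real.pi),
    ‖(g x : ℂ) * (fourier (-k) x / (Real.sqrt (2 * Real.pi) : ℂ) -
        ∫ y : AddCircle (2 * Real.pi),
          (g y : ℂ) * (fourier (-k) y / (Real.sqrt (2 * Real.pi) : ℂ)))‖ ^ 2

/-!
For `k = 0` the test function is constant, and since `∫ g = 1` it equals its own `g`-average,
so `Gℓ = 0`. For `k ≠ 0` the integrand of `β_k` vanishes identically only if
`e^{-ikx}` is constant on the nonempty open set `{g ≠ 0}`; but its level sets are cosets of the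
finite `k`-torsion of `𝕋`, and open sets of the connected circle are infinite.
-/

namespace AddCircle

variable {T : ℝ} [hT : Fact (0 < T)]

instance : Nontrivial (AddCircle T) := by
  refine ⟨⟨((0 : ℝ) : AddCircle T), ((T / 2 : ℝ) : AddCircle T), fun h => ?_⟩⟩
  have hT' := hT.out
  have := (coe_eq_coe_iff_of_mem_Ico (a := 0) (p := T) ⟨le_rfl, by linarith⟩
    ⟨by linarith, by linarith⟩).1 h
  linarith

theorem setOf_fourier_eq_finite {n : ℤ} (hn : n ≠ 0) (w : ℂ) :
    {x : AddCircle T | fourier n x = w}.Finite := by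
  rcases Set.eq_empty_or_nonempty {x : AddCircle T | fourier n x = w} with h | ⟨x₀, hx₀⟩
  · rw [h]
    exact Set.finite_empty
  refine ((finite_torsion_of_isSMulRegular_int T n (.of_ne_zero hn)).preimage
    (sub_left_injective (b := x₀)).injOn).subset fun x hx => ?_
  have : toCircle (n • x) = toCircle (n • x₀) := by
    ext1
    simpa only [fourier_apply] using hx.trans hx₀.symm
  simpa [smul_sub, sub_eq_zero] using injective_toCircle hT.out.ne' this

theorem exists_fourier_ne_of_isOpen {U : Set (AddCircle T)} (hU : IsOpen U) (hne : U.Nonempty)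
    {n : ℤ} (hn : n ≠ 0) (w : ℂ) : ∃ x ∈ U, fourier n x ≠ w := by
  by_contra! h
  obtain ⟨x, hx⟩ := hne
  exact infinite_of_mem_nhds x (hU.mem_nhds hx) ((setOf_fourier_eq_finite hn w).subset h)

end AddCircle

theorem betaCoef_zero {g : AddCircle (2 * Real.pi) → ℝ}
    (hg_int : ∫ x : AddCircle (2 * Real.pi), g x = 1) : betaCoef g 0 = 0 := by
  have hg_int' : ∫ x : AddCircle (2 * Real.pi), (g x : ℂ) = 1 := by
    rw [integral_complex_ofReal, hg_int, Complex.ofReal_one]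
  simp [betaCoef, integral_mul_const, hg_int']

theorem betaCoef_pos {g : AddCircle (2 * Real.pi) → ℝ} (hg_cont : Continuous g) (hg : g ≠ 0)
    {k : ℤ} (hk : k ≠ 0) : 0 < betaCoef g k := by
  set s : ℂ := (Real.sqrt (2 * Real.pi) : ℂ)
  set c : ℂ := ∫ y : AddCircle (2 * Real.pi), (g y : ℂ) * (fourier (-k) y / s)
  have hs : s ≠ 0 := Complex.ofReal_ne_zero.2 (by positivity)
  obtain ⟨x, hgx, hx⟩ := AddCircle.exists_fourier_ne_of_isOpen
    (isOpen_ne_fun hg_cont continuous_const) (Function.ne_iff.1 hg) (neg_ne_zero.2 hk) (c * s)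
  have hcont : Continuous fun x => ‖(g x : ℂ) * (fourier (-k) x / s - c)‖ ^ 2 := by fun_prop
  refine hcont.integral_pos_of_hasCompactSupport_nonneg_nonzero
    (.of_compactSpace _) (fun _ => by positivity) (x := x) ?_
  refine pow_ne_zero _ (norm_ne_zero_iff.2 (mul_ne_zero (Complex.ofReal_ne_zero.2 hgx) ?_))
  rwa [sub_ne_zero, Ne, div_eq_iff hs]

theorem betaCoef_zero_and_pos_general (g : AddCircle (2 * Real.pi) → ℝ)
    (hg_cont : Continuous g)
    (hg_int : ∫ x : AddCircle (2 * Real.pi), g x = 1) :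
    betaCoef g 0 = 0 ∧ ∀ k : ℤ, k ≠ 0 → 0 < betaCoef g k := by
  have hg : g ≠ 0 := by
    rintro rfl
    simp at hg_int
  exact ⟨betaCoef_zero hg_int, fun k hk => betaCoef_pos hg_cont hg hk⟩

/-- If `g : 𝕋 → ℝ` is continuous, nonnegative, with `∫ g = 1`, then `β_0 = 0`
and `β_k > 0` for every `k ≠ 0`. -/
theorem betaCoef_zero_and_pos (g : AddCircle (2 * Real.pi) → ℝ)
    (hg_cont : Continuous g) (hg_nonneg : ∀ x, 0 ≤ g x)
    (hg_int : ∫ x : AddCircle (2 * Real.pi), g x = 1) :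
    betaCoef g 0 = 0 ∧ ∀ k : ℤ, k ≠ 0 → 0 < betaCoef g k :=
  betaCoef_zero_and_pos_general g hg_cont hg_int
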